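/- (BEC-bound for H_α^J.) Fix α > 0, α ≠ 1, and suppose that for every fixed y ∈ I_α^H the map x ↦ κ_α^H(x,y) is convex on I_α^H, and likewise in the second argument for every fixed first argument. Write K_i = K_α^J(X_i|Y_i) and δ = δ_α^H = 2^{1-α}. Then: if α > 1, H_α^J(X_1+X_2|Y_1Y_2) ≥ (1/(1-α))·log( (δ − K_1)(δ − K_2)/(1 − δ) + δ ); and if α < 1, H_α^J(X_1+X_2|Y_1Y_2) ≤ (1/(1-α))·log( (δ − K_1)(δ − K_2)/(1 − δ) + δ ). If instead κ_α^H is concave in each argument, the two inequalities hold with ≤ and ≥ exchanged. -/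

import Mathlib

/-!
Put `K(p) = exp ((1 - α) H_α^J(X|Y))`, so that `H_α^J = log K / (1 - α)`. For binary `X`, `K` is
the average of `k_α^H (P(X = 1 | Y = y))` under the escort distribution `q(y)^α / ∑ q^α` of the
law `q` of `Y`. For `X₁ + X₂` given `(Y₁, Y₂)` the escort distribution is the product of the two,
and the conditional probabilities convolve, so `K` is the product average of
`k(a ∗ b) = κ_α^H (k a, k b)`; since `k` is symmetric under `a ↦ 1 - a`, this holds for all
`a, b ∈ [0, 1]`. Convexity of `κ_α^H (·, y)` bounds it by the chord through `κ(1, y) = y` and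
`κ(δ, y) = δ`. The chord `(δ - x)(δ - y)/(1 - δ) + δ` is affine in each argument, so it averages to
the same expression in `K₁, K₂`. The sign of `1 / (1 - α)` then decides the direction of the
entropy bound.
-/


open Real

noncomputable section

/-- Binary convolution `a∗b = a(1-b) + (1-a)b`. -/
def bconv (a b : ℝ) : ℝ := a * (1 - b) + (1 - a) * b

/-- Binary Rényi entropy `h_α(p) = (1/(1-α))·log(p^α + (1-p)^α)`. -/
def binH (α p : ℝ) : ℝ := (1 / (1 - α)) * Real.log (p ^ α + (1 - p) ^ α)

/-- Inverse of `h_α` as a map `[0, log 2] → [0, 1/2]`. -/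
def binHInv (α : ℝ) : ℝ → ℝ := Function.invFunOn (binH α) (Set.Icc 0 (1/2))

/-- `k_α^A(p) = (p^α + (1-p)^α)^{1/α}`. -/
def kA (α p : ℝ) : ℝ := (p ^ α + (1 - p) ^ α) ^ (1/α)

/-- Inverse of `k_α^A`, mapping `I_α^A` back to `[0,1/2]`. -/
def kAInv (α : ℝ) : ℝ → ℝ := Function.invFunOn (kA α) (Set.Icc 0 (1/2))

/-- `δ_α^A = 2^{(1-α)/α}`. -/
def deltaA (α : ℝ) : ℝ := (2 : ℝ) ^ ((1 - α)/α)

/-- The closed interval `I_α^A` with endpoints `1` and `δ_α^A`. -/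
def IA (α : ℝ) : Set ℝ := Set.uIcc 1 (deltaA α)

/-- `κ_α^A(x,y) = k_α^A((k_α^A)⁻¹(x) ∗ (k_α^A)⁻¹(y))`. -/
def kkA (α x y : ℝ) : ℝ := kA α (bconv (kAInv α x) (kAInv α y))

/-- `k_α^H(p) = p^α + (1-p)^α`. -/
def kH (α p : ℝ) : ℝ := p ^ α + (1 - p) ^ α

/-- Inverse of `k_α^H`, mapping `I_α^H` back to `[0,1/2]`. -/
def kHInv (α : ℝ) : ℝ → ℝ := Function.invFunOn (kH α) (Set.Icc 0 (1/2))

/-- `δ_α^H = 2^{1-α}`. -/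
def deltaH (α : ℝ) : ℝ := (2 : ℝ) ^ (1 - α)

/-- The closed interval `I_α^H` with endpoints `1` and `δ_α^H`. -/
def IH (α : ℝ) : Set ℝ := Set.uIcc 1 (deltaH α)

/-- `κ_α^H(x,y) = k_α^H((k_α^H)⁻¹(x) ∗ (k_α^H)⁻¹(y))`. -/
def kkH (α x y : ℝ) : ℝ := kH α (bconv (kHInv α x) (kHInv α y))

/-- `ĥ_α(x,y) = h_α(h_α⁻¹(x) ∗ h_α⁻¹(y))`. -/
def hhat (α x y : ℝ) : ℝ := binH α (bconv (binHInv α x) (binHInv α y))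

/-- Marginal on `Y` of a joint pmf. -/
def margY {X Y : Type*} [Fintype X] (p : X → Y → ℝ) (y : Y) : ℝ := ∑ x, p x y

/-- A joint pmf: nonnegative entries summing to one. -/
def IsPmf {X Y : Type*} [Fintype X] [Fintype Y] (p : X → Y → ℝ) : Prop :=
  (∀ x y, 0 ≤ p x y) ∧ ∑ x, ∑ y, p x y = 1

/-- Arimoto conditional Rényi entropy `H_α^A(X|Y)`. -/
def condA (α : ℝ) {X Y : Type*} [Fintype X] [Fintype Y] (p : X → Y → ℝ) : ℝ :=
  (α / (1 - α)) * Real.log (∑ y, margY p y * (∑ x, (p x y / margY p y) ^ α) ^ (1/α))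

/-- Hayashi conditional Rényi entropy `H_α^H(X|Y)`. -/
def condH (α : ℝ) {X Y : Type*} [Fintype X] [Fintype Y] (p : X → Y → ℝ) : ℝ :=
  (1 / (1 - α)) * Real.log (∑ y, ∑ x, margY p y * (p x y / margY p y) ^ α)

/-- Jizba–Arimitsu conditional Rényi entropy `H_α^J(X|Y)`. -/
def condJ (α : ℝ) {X Y : Type*} [Fintype X] [Fintype Y] (p : X → Y → ℝ) : ℝ :=
  (1 / (1 - α)) * (Real.log (∑ x, ∑ y, p x y ^ α) - Real.log (∑ y, margY p y ^ α))

/-- Cachin conditional Rényi entropy `H_α^C(X|Y)`. -/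
def condC (α : ℝ) {X Y : Type*} [Fintype X] [Fintype Y] (p : X → Y → ℝ) : ℝ :=
  (1 / (1 - α)) * ∑ y, margY p y * Real.log (∑ x, (p x y / margY p y) ^ α)

/-- `K_α^A(X|Y) = exp(((1-α)/α)·H_α^A(X|Y))`. -/
def KA (α : ℝ) {X Y : Type*} [Fintype X] [Fintype Y] (p : X → Y → ℝ) : ℝ :=
  Real.exp (((1 - α)/α) * condA α p)

/-- `K_α^H(X|Y) = exp((1-α)·H_α^H(X|Y))`. -/
def KH (α : ℝ) {X Y : Type*} [Fintype X] [Fintype Y] (p : X → Y → ℝ) : ℝ :=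
  Real.exp ((1 - α) * condH α p)

/-- `K_α^J(X|Y) = exp((1-α)·H_α^J(X|Y))`. -/
def KJ (α : ℝ) {X Y : Type*} [Fintype X] [Fintype Y] (p : X → Y → ℝ) : ℝ :=
  Real.exp ((1 - α) * condJ α p)

/-- Joint pmf of `(X₁+X₂, (Y₁,Y₂))` for independent pairs `(X₁,Y₁)`, `(X₂,Y₂)`. -/
def combine {Y1 Y2 : Type*} (p1 : Bool → Y1 → ℝ) (p2 : Bool → Y2 → ℝ) :
    Bool → Y1 × Y2 → ℝ :=
  fun z y => ∑ x : Bool, p1 x y.1 * p2 (Bool.xor x z) y.2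

/-- `k_∞^A(p) = max{p, 1-p}`. -/
def kInf (p : ℝ) : ℝ := max p (1 - p)

/-- Binary min-entropy `h_∞(p) = -log max{p, 1-p}`. -/
def binHInf (p : ℝ) : ℝ := - Real.log (max p (1 - p))

/-- Inverse of the restriction of `h_∞` to `[0,1/2]`. -/
def binHInfInv : ℝ → ℝ := Function.invFunOn binHInf (Set.Icc 0 (1/2))

/-- Conditional min-entropy `H_∞(X|Y)` for binary `X`. -/
def condInf {Y : Type*} [Fintype Y] (p : Bool → Y → ℝ) : ℝ :=
  - Real.log (∑ y, margY p y * max (p false y / margY p y) (p true y / margY p y))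

/-- Unconditional Rényi entropy of a finitely supported distribution. -/
def renyiEnt (α : ℝ) {X : Type*} [Fintype X] (p : X → ℝ) : ℝ :=
  (1 / (1 - α)) * Real.log (∑ x, p x ^ α)

/-- Distribution of the mod-2 sum of two independent binary random variables. -/
def sumDist (p1 p2 : Bool → ℝ) : Bool → ℝ := fun z => ∑ x : Bool, p1 x * p2 (Bool.xor x z)

open Set Finset

section BinaryPower

variable {α : ℝ}

lemma deltaH_pos : 0 < deltaH α := rpow_pos_of_pos two_pos _

lemma kH_zero (hα : 0 < α) : kH α 0 = 1 := by
  simp [kH, zero_rpow hα.ne']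

lemma kH_half : kH α (1 / 2) = deltaH α := by
  rw [kH, deltaH, show (1 : ℝ) - 1 / 2 = 1 / 2 by norm_num, ← two_mul, div_rpow zero_le_one
    zero_le_two, one_rpow, rpow_sub two_pos, rpow_one]
  ring

lemma kH_one_sub (a : ℝ) : kH α (1 - a) = kH α a := by
  rw [kH, kH, sub_sub_cancel, add_comm]

lemma kH_pos {a : ℝ} (ha : a ∈ Icc (0 : ℝ) 1) : 0 < kH α a := by
  rcases ha.1.eq_or_lt with rfl | ha0
  · simp only [kH, sub_zero, one_rpow]
    positivity
  · exact add_pos_of_pos_of_nonneg (rpow_pos_of_pos ha0 α) (rpow_nonneg (by linarith [ha.2]) α)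

lemma kH_hasDerivAt {x : ℝ} (hx : x ∈ Ioo (0 : ℝ) 1) :
    HasDerivAt (kH α) (α * x ^ (α - 1) - α * (1 - x) ^ (α - 1)) x := by
  have h1 := hasDerivAt_rpow_const (p := α) (Or.inl hx.1.ne')
  have h2 := (hasDerivAt_rpow_const (p := α) (Or.inl (sub_pos.2 hx.2).ne')).comp x
    ((hasDerivAt_id x).const_sub 1)
  exact (h1.add h2).congr_deriv (by ring)

lemma kH_continuous (hα : 0 ≤ α) : Continuous (kH α) :=
  (continuous_rpow_const hα).add ((continuous_rpow_const hα).comp (continuous_sub_left 1))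

lemma kH_strictMonoOn (hα : 0 < α) (hα1 : α < 1) : StrictMonoOn (kH α) (Icc 0 (1 / 2)) := by
  refine strictMonoOn_of_deriv_pos (convex_Icc _ _) (kH_continuous hα.le).continuousOn
    fun x hx => ?_
  rw [interior_Icc] at hx
  rw [(kH_hasDerivAt ⟨hx.1, by linarith [hx.2]⟩).deriv, ← mul_sub]
  exact mul_pos hα (sub_pos.2 (rpow_lt_rpow_of_neg hx.1 (by linarith [hx.2]) (by linarith)))

lemma kH_strictAntiOn (hα1 : 1 < α) : StrictAntiOn (kH α) (Icc 0 (1 / 2)) := by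
  refine strictAntiOn_of_deriv_neg (convex_Icc _ _) (kH_continuous (by linarith)).continuousOn
    fun x hx => ?_
  rw [interior_Icc] at hx
  rw [(kH_hasDerivAt ⟨hx.1, by linarith [hx.2]⟩).deriv, ← mul_sub]
  exact mul_neg_of_pos_of_neg (by linarith)
    (sub_neg.2 (rpow_lt_rpow hx.1.le (by linarith [hx.2]) (by linarith)))

lemma kH_injOn (hα : 0 < α) (hα1 : α ≠ 1) : InjOn (kH α) (Icc 0 (1 / 2)) := by
  rcases hα1.lt_or_gt with h | h
  · exact (kH_strictMonoOn hα h).injOn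
  · exact (kH_strictAntiOn h).injOn

lemma deltaH_ne_one (hα : 0 < α) (hα1 : α ≠ 1) : deltaH α ≠ 1 := by
  have := (kH_injOn hα hα1).ne (x := 1 / 2) (y := 0) (by norm_num) (by norm_num) (by norm_num)
  rwa [kH_half, kH_zero hα] at this

lemma kH_mem_IH (hα : 0 < α) (hα1 : α ≠ 1) {a : ℝ} (ha : a ∈ Icc (0 : ℝ) 1) : kH α a ∈ IH α := by
  wlog ha2 : a ≤ 1 / 2 generalizing a
  · rw [← kH_one_sub]
    exact this ⟨by linarith [ha.2], by linarith [ha.1]⟩ (by linarith)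
  have hmaps : MapsTo (kH α) (Icc 0 (1 / 2)) (uIcc (kH α 0) (kH α (1 / 2))) := by
    rcases hα1.lt_or_gt with h | h
    · exact (kH_strictMonoOn hα h).monotoneOn.mapsTo_Icc.mono_right Icc_subset_uIcc
    · exact (kH_strictAntiOn h).antitoneOn.mapsTo_Icc.mono_right Icc_subset_uIcc'
  have := hmaps ⟨ha.1, ha2⟩
  rwa [kH_zero hα, kH_half] at this

lemma kHInv_kH (hα : 0 < α) (hα1 : α ≠ 1) {a : ℝ} (ha : a ∈ Icc (0 : ℝ) (1 / 2)) :
    kHInv α (kH α a) = a :=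
  (kH_injOn hα hα1).leftInvOn_invFunOn ha

end BinaryPower

section Convolution

variable {α : ℝ}

lemma bconv_mem_Icc {a b : ℝ} (ha : a ∈ Icc (0 : ℝ) 1) (hb : b ∈ Icc (0 : ℝ) 1) :
    bconv a b ∈ Icc (0 : ℝ) 1 := by
  obtain ⟨ha0, ha1⟩ := ha
  obtain ⟨hb0, hb1⟩ := hb
  constructor <;> unfold bconv <;> nlinarith

lemma bconv_one_sub_left (a b : ℝ) : bconv (1 - a) b = 1 - bconv a b := by
  unfold bconv; ring

lemma bconv_one_sub_right (a b : ℝ) : bconv a (1 - b) = 1 - bconv a b := by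
  unfold bconv; ring

lemma kHInv_kH_eq_or (hα : 0 < α) (hα1 : α ≠ 1) {a : ℝ} (ha : a ∈ Icc (0 : ℝ) 1) :
    kHInv α (kH α a) = a ∨ kHInv α (kH α a) = 1 - a := by
  rcases le_or_gt a (1 / 2) with h | h
  · exact Or.inl (kHInv_kH hα hα1 ⟨ha.1, h⟩)
  · rw [← kH_one_sub]
    exact Or.inr (kHInv_kH hα hα1 ⟨by linarith [ha.2], by linarith⟩)

lemma kkH_kH (hα : 0 < α) (hα1 : α ≠ 1) {a b : ℝ} (ha : a ∈ Icc (0 : ℝ) 1)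
    (hb : b ∈ Icc (0 : ℝ) 1) : kkH α (kH α a) (kH α b) = kH α (bconv a b) := by
  rcases kHInv_kH_eq_or hα hα1 ha with ha' | ha' <;>
  rcases kHInv_kH_eq_or hα hα1 hb with hb' | hb' <;>
  simp only [kkH, ha', hb', bconv_one_sub_left, bconv_one_sub_right, sub_sub_cancel, kH_one_sub]

lemma kkH_one_left (hα : 0 < α) (hα1 : α ≠ 1) {b : ℝ} (hb : b ∈ Icc (0 : ℝ) 1) :
    kkH α 1 (kH α b) = kH α b := by
  rw [← kH_zero hα, kkH_kH hα hα1 ⟨le_rfl, zero_le_one⟩ hb, bconv]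
  congr 1; ring

lemma kkH_deltaH_left (hα : 0 < α) (hα1 : α ≠ 1) {b : ℝ} (hb : b ∈ Icc (0 : ℝ) 1) :
    kkH α (deltaH α) (kH α b) = deltaH α := by
  rw [← kH_half, kkH_kH hα hα1 ⟨by norm_num, by norm_num⟩ hb, bconv]
  congr 1; ring

end Convolution

def becBound (δ x y : ℝ) : ℝ := (δ - x) * (δ - y) / (1 - δ) + δ

section BECBound

variable {δ : ℝ}

lemma becBound_smul_add (hδ : δ ≠ 1) {s t : ℝ} (hst : s + t = 1) (y : ℝ) :
    becBound δ (s • 1 + t • δ) y = s • y + t • δ := by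
  have : 1 - δ ≠ 0 := sub_ne_zero.2 hδ.symm
  obtain rfl : t = 1 - s := by linarith
  simp only [becBound, smul_eq_mul]
  field_simp
  ring

lemma becBound_pos (hδ : 0 < δ) (hδ1 : δ ≠ 1) {x y : ℝ} (hx : x ∈ uIcc 1 δ) (hy : 0 < y) :
    0 < becBound δ x y := by
  rw [← segment_eq_uIcc] at hx
  obtain ⟨s, t, hs, ht, hst, rfl⟩ := hx
  rw [becBound_smul_add hδ1 hst]
  exact convex_Ioi (0 : ℝ) (mem_Ioi.2 hy) (mem_Ioi.2 hδ) hs ht hst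

lemma sum_sum_mul_becBound {ι κ : Type*} {s : Finset ι} {t : Finset κ} {u : ι → ℝ} {v : κ → ℝ}
    (hu : ∑ i ∈ s, u i = 1) (hv : ∑ j ∈ t, v j = 1) (x : ι → ℝ) (y : κ → ℝ) :
    ∑ i ∈ s, ∑ j ∈ t, u i * v j * becBound δ (x i) (y j) =
      becBound δ (∑ i ∈ s, u i * x i) (∑ j ∈ t, v j * y j) := by
  calc _ = ∑ i ∈ s, ∑ j ∈ t,
        ((u i * (δ - x i) / (1 - δ)) * (v j * (δ - y j)) + u i * δ * v j) := by
        refine sum_congr rfl fun i _ => sum_congr rfl fun j _ => ?_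
        unfold becBound; ring
    _ = (∑ i ∈ s, u i * (δ - x i) / (1 - δ)) * (∑ j ∈ t, v j * (δ - y j)) +
        (∑ i ∈ s, u i * δ) * ∑ j ∈ t, v j := by
        simp only [sum_add_distrib, sum_mul_sum]
    _ = _ := by
        simp only [← sum_div, ← sum_mul, mul_sub, sum_sub_distrib, hu, hv]
        unfold becBound; ring

end BECBound

section Chord

variable {α : ℝ}

lemma kH_bconv_le_becBound (hα : 0 < α) (hα1 : α ≠ 1)
    (hconv : ∀ y ∈ IH α, ConvexOn ℝ (IH α) (fun x => kkH α x y)) {a b : ℝ}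
    (ha : a ∈ Icc (0 : ℝ) 1) (hb : b ∈ Icc (0 : ℝ) 1) :
    kH α (bconv a b) ≤ becBound (deltaH α) (kH α a) (kH α b) := by
  obtain ⟨s, t, hs, ht, hst, hx⟩ : kH α a ∈ segment ℝ 1 (deltaH α) := by
    rw [segment_eq_uIcc]; exact kH_mem_IH hα hα1 ha
  have h := (hconv _ (kH_mem_IH hα hα1 hb)).2 left_mem_uIcc right_mem_uIcc hs ht hst
  simp only [hx, kkH_kH hα hα1 ha hb, kkH_one_left hα hα1 hb, kkH_deltaH_left hα hα1 hb] at h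
  rwa [← hx, becBound_smul_add (deltaH_ne_one hα hα1) hst]

lemma becBound_le_kH_bconv (hα : 0 < α) (hα1 : α ≠ 1)
    (hconc : ∀ y ∈ IH α, ConcaveOn ℝ (IH α) (fun x => kkH α x y)) {a b : ℝ}
    (ha : a ∈ Icc (0 : ℝ) 1) (hb : b ∈ Icc (0 : ℝ) 1) :
    becBound (deltaH α) (kH α a) (kH α b) ≤ kH α (bconv a b) := by
  obtain ⟨s, t, hs, ht, hst, hx⟩ : kH α a ∈ segment ℝ 1 (deltaH α) := by
    rw [segment_eq_uIcc]; exact kH_mem_IH hα hα1 ha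
  have h := (hconc _ (kH_mem_IH hα hα1 hb)).2 left_mem_uIcc right_mem_uIcc hs ht hst
  simp only [hx, kkH_kH hα hα1 ha hb, kkH_one_left hα hα1 hb, kkH_deltaH_left hα hα1 hb] at h
  rwa [← hx, becBound_smul_add (deltaH_ne_one hα hα1) hst]

end Chord

section Distributions

variable {α : ℝ} {Y Y1 Y2 : Type*}

def jointOfCond (q a : Y → ℝ) : Bool → Y → ℝ := fun x y => q y * bif x then a y else 1 - a y

lemma margY_jointOfCond (q a : Y → ℝ) : margY (jointOfCond q a) = q :=
  funext fun y => by simp only [margY, jointOfCond, Fintype.sum_bool, cond_true, cond_false]; ring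

lemma combine_jointOfCond (q1 a1 : Y1 → ℝ) (q2 a2 : Y2 → ℝ) :
    combine (jointOfCond q1 a1) (jointOfCond q2 a2) =
      jointOfCond (fun y => q1 y.1 * q2 y.2) (fun y => bconv (a1 y.1) (a2 y.2)) := by
  funext z y
  cases z <;>
  simp only [combine, jointOfCond, bconv, Fintype.sum_bool, Bool.xor_true, Bool.xor_false,
    Bool.not_true, Bool.not_false, cond_true, cond_false] <;> ring

lemma sum_rpow_jointOfCond {q a : Y → ℝ} {y : Y} (hq : 0 ≤ q y) (ha : a y ∈ Icc (0 : ℝ) 1) :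
    ∑ x, jointOfCond q a x y ^ α = q y ^ α * kH α (a y) := by
  simp only [jointOfCond, Fintype.sum_bool, cond_true, cond_false, mul_rpow hq ha.1,
    mul_rpow hq (sub_nonneg.2 ha.2), kH]
  ring

variable [Fintype Y] [Fintype Y1] [Fintype Y2]

lemma IsPmf.exists_eq_jointOfCond {p : Bool → Y → ℝ} (hp : IsPmf p) :
    ∃ q ∈ stdSimplex ℝ Y, ∃ a : Y → ℝ, (∀ y, a y ∈ Icc (0 : ℝ) 1) ∧ p = jointOfCond q a := by
  have hmarg : ∀ y, margY p y = p true y + p false y := fun y => Fintype.sum_bool _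
  have hq : margY p ∈ stdSimplex ℝ Y :=
    ⟨fun y => sum_nonneg fun x _ => hp.1 x y, sum_comm.trans hp.2⟩
  refine ⟨margY p, hq, fun y => p true y / margY p y, fun y => ⟨div_nonneg (hp.1 _ _) (hq.1 y),
    div_le_one_of_le₀ (by linarith [hmarg y, hp.1 false y]) (hq.1 y)⟩, funext₂ fun x y => ?_⟩
  rcases eq_or_ne (margY p y) 0 with h0 | h0
  · have := hp.1 true y
    have := hp.1 false y
    cases x <;> simp only [jointOfCond, h0, zero_mul] <;> linarith [hmarg y]
  · cases x
    · simp only [jointOfCond, cond_false, mul_sub, mul_one, mul_div_cancel₀ _ h0]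
      linarith [hmarg y]
    · simp only [jointOfCond, cond_true, mul_div_cancel₀ _ h0]

lemma mul_mem_stdSimplex {q1 : Y1 → ℝ} {q2 : Y2 → ℝ} (hq1 : q1 ∈ stdSimplex ℝ Y1)
    (hq2 : q2 ∈ stdSimplex ℝ Y2) : (fun y : Y1 × Y2 => q1 y.1 * q2 y.2) ∈ stdSimplex ℝ (Y1 × Y2) :=
  ⟨fun y => mul_nonneg (hq1.1 _) (hq2.1 _), by
    rw [Fintype.sum_prod_type, ← sum_mul_sum, hq1.2, hq2.2, one_mul]⟩

lemma exists_pos_of_mem_stdSimplex {q : Y → ℝ} (hq : q ∈ stdSimplex ℝ Y) : ∃ y, 0 < q y := by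
  obtain ⟨y, -, hy⟩ := exists_ne_zero_of_sum_ne_zero (hq.2.trans_ne one_ne_zero)
  exact ⟨y, (hq.1 y).lt_of_ne' hy⟩

lemma sum_rpow_pos {q : Y → ℝ} (hq : q ∈ stdSimplex ℝ Y) : 0 < ∑ y, q y ^ α := by
  obtain ⟨y, hy⟩ := exists_pos_of_mem_stdSimplex hq
  exact sum_pos' (fun y _ => rpow_nonneg (hq.1 y) α) ⟨y, mem_univ y, rpow_pos_of_pos hy α⟩

def escort (α : ℝ) (q : Y → ℝ) (y : Y) : ℝ := q y ^ α / ∑ y', q y' ^ α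

lemma escort_nonneg {q : Y → ℝ} (hq : ∀ y, 0 ≤ q y) (y : Y) : 0 ≤ escort α q y :=
  div_nonneg (rpow_nonneg (hq y) α) (sum_nonneg fun y _ => rpow_nonneg (hq y) α)

lemma sum_escort {q : Y → ℝ} (hq : q ∈ stdSimplex ℝ Y) : ∑ y, escort α q y = 1 := by
  simp only [escort, ← sum_div]
  exact div_self (sum_rpow_pos hq).ne'

lemma escort_mul {q1 : Y1 → ℝ} {q2 : Y2 → ℝ} (hq1 : ∀ y, 0 ≤ q1 y) (hq2 : ∀ y, 0 ≤ q2 y)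
    (y1 : Y1) (y2 : Y2) :
    escort α (fun y : Y1 × Y2 => q1 y.1 * q2 y.2) (y1, y2) = escort α q1 y1 * escort α q2 y2 := by
  simp only [escort, mul_rpow (hq1 _) (hq2 _), Fintype.sum_prod_type, ← sum_mul_sum,
    div_mul_div_comm]

lemma condJ_eq_log_KJ (hα1 : α ≠ 1) (p : Bool → Y → ℝ) :
    condJ α p = 1 / (1 - α) * log (KJ α p) := by
  rw [KJ, log_exp]
  field_simp [sub_ne_zero.2 hα1.symm]

lemma KJ_jointOfCond (hα1 : α ≠ 1) {q a : Y → ℝ} (hq : q ∈ stdSimplex ℝ Y)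
    (ha : ∀ y, a y ∈ Icc (0 : ℝ) 1) :
    KJ α (jointOfCond q a) = ∑ y, escort α q y * kH α (a y) := by
  obtain ⟨y₀, hy₀⟩ := exists_pos_of_mem_stdSimplex hq
  have hN : 0 < ∑ y, q y ^ α * kH α (a y) :=
    sum_pos' (fun y _ => mul_nonneg (rpow_nonneg (hq.1 y) α) (kH_pos (ha y)).le)
      ⟨y₀, mem_univ _, mul_pos (rpow_pos_of_pos hy₀ α) (kH_pos (ha y₀))⟩
  rw [KJ, condJ, margY_jointOfCond, sum_comm]
  simp only [sum_rpow_jointOfCond (hq.1 _) (ha _)]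
  rw [← mul_assoc, mul_one_div_cancel (sub_ne_zero.2 hα1.symm), one_mul, exp_sub, exp_log hN,
    exp_log (sum_rpow_pos hq), sum_div]
  exact sum_congr rfl fun y _ => div_mul_eq_mul_div _ _ _ |>.symm

lemma KJ_jointOfCond_mem_IH (hα : 0 < α) (hα1 : α ≠ 1) {q a : Y → ℝ} (hq : q ∈ stdSimplex ℝ Y)
    (ha : ∀ y, a y ∈ Icc (0 : ℝ) 1) : KJ α (jointOfCond q a) ∈ IH α := by
  rw [KJ_jointOfCond hα1 hq ha]
  exact convex_uIcc _ _ |>.sum_mem (fun y _ => escort_nonneg hq.1 y) (sum_escort hq)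
    fun y _ => kH_mem_IH hα hα1 (ha y)

end Distributions

section Combination

variable {α : ℝ} {Y1 Y2 : Type*} [Fintype Y1] [Fintype Y2] {q1 a1 : Y1 → ℝ} {q2 a2 : Y2 → ℝ}

lemma KJ_combine_jointOfCond (hα1 : α ≠ 1) (hq1 : q1 ∈ stdSimplex ℝ Y1)
    (hq2 : q2 ∈ stdSimplex ℝ Y2) (ha1 : ∀ y, a1 y ∈ Icc (0 : ℝ) 1)
    (ha2 : ∀ y, a2 y ∈ Icc (0 : ℝ) 1) :
    KJ α (combine (jointOfCond q1 a1) (jointOfCond q2 a2)) =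
      ∑ y1, ∑ y2, escort α q1 y1 * escort α q2 y2 * kH α (bconv (a1 y1) (a2 y2)) := by
  rw [combine_jointOfCond, KJ_jointOfCond hα1 (mul_mem_stdSimplex hq1 hq2)
    (fun y => bconv_mem_Icc (ha1 _) (ha2 _)), Fintype.sum_prod_type]
  simp only [escort_mul hq1.1 hq2.1]

lemma becBound_KJ_jointOfCond (hα1 : α ≠ 1) (hq1 : q1 ∈ stdSimplex ℝ Y1)
    (hq2 : q2 ∈ stdSimplex ℝ Y2) (ha1 : ∀ y, a1 y ∈ Icc (0 : ℝ) 1)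
    (ha2 : ∀ y, a2 y ∈ Icc (0 : ℝ) 1) (δ : ℝ) :
    becBound δ (KJ α (jointOfCond q1 a1)) (KJ α (jointOfCond q2 a2)) =
      ∑ y1, ∑ y2, escort α q1 y1 * escort α q2 y2 * becBound δ (kH α (a1 y1)) (kH α (a2 y2)) := by
  rw [KJ_jointOfCond hα1 hq1 ha1, KJ_jointOfCond hα1 hq2 ha2]
  exact (sum_sum_mul_becBound (sum_escort hq1) (sum_escort hq2) _ _).symm

end Combination

lemma one_div_one_sub_mul_log_mono {α x y : ℝ} (hx : 0 < x) (hxy : x ≤ y) :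
    (1 < α → 1 / (1 - α) * log y ≤ 1 / (1 - α) * log x) ∧
      (α < 1 → 1 / (1 - α) * log x ≤ 1 / (1 - α) * log y) :=
  ⟨fun hα => mul_le_mul_of_nonpos_left (log_le_log hx hxy)
      (div_nonpos_of_nonneg_of_nonpos zero_le_one (by linarith)),
    fun hα => mul_le_mul_of_nonneg_left (log_le_log hx hxy) (div_nonneg zero_le_one (by linarith))⟩

/-- BEC-bound for the Jizba–Arimitsu conditional Rényi entropy,
under convexity/concavity of `κ_α^H`. -/
theorem stmt_12 (α : ℝ) (hα : 0 < α) (hα1 : α ≠ 1)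
    {Y1 Y2 : Type*} [Fintype Y1] [Fintype Y2]
    (p1 : Bool → Y1 → ℝ) (p2 : Bool → Y2 → ℝ)
    (hp1 : IsPmf p1) (hp2 : IsPmf p2) :
    (((∀ y ∈ IH α, ConvexOn ℝ (IH α) (fun x => kkH α x y)) ∧
      (∀ x ∈ IH α, ConvexOn ℝ (IH α) (fun y => kkH α x y))) →
      (1 < α → (1 / (1 - α)) * Real.log
          ((deltaH α - KJ α p1) * (deltaH α - KJ α p2) / (1 - deltaH α) + deltaH α) ≤
          condJ α (combine p1 p2)) ∧
      (α < 1 → condJ α (combine p1 p2) ≤ (1 / (1 - α)) * Real.log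
          ((deltaH α - KJ α p1) * (deltaH α - KJ α p2) / (1 - deltaH α) + deltaH α))) ∧
    (((∀ y ∈ IH α, ConcaveOn ℝ (IH α) (fun x => kkH α x y)) ∧
      (∀ x ∈ IH α, ConcaveOn ℝ (IH α) (fun y => kkH α x y))) →
      (1 < α → condJ α (combine p1 p2) ≤ (1 / (1 - α)) * Real.log
          ((deltaH α - KJ α p1) * (deltaH α - KJ α p2) / (1 - deltaH α) + deltaH α)) ∧
      (α < 1 → (1 / (1 - α)) * Real.log
          ((deltaH α - KJ α p1) * (deltaH α - KJ α p2) / (1 - deltaH α) + deltaH α) ≤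
          condJ α (combine p1 p2))) := by
  obtain ⟨q1, hq1, a1, ha1, rfl⟩ := hp1.exists_eq_jointOfCond
  obtain ⟨q2, hq2, a2, ha2, rfl⟩ := hp2.exists_eq_jointOfCond
  have hweight : ∀ y1 y2, 0 ≤ escort α q1 y1 * escort α q2 y2 :=
    fun y1 y2 => mul_nonneg (escort_nonneg hq1.1 y1) (escort_nonneg hq2.1 y2)
  have hK := KJ_combine_jointOfCond hα1 hq1 hq2 ha1 ha2
  have hB := becBound_KJ_jointOfCond hα1 hq1 hq2 ha1 ha2 (deltaH α)
  rw [condJ_eq_log_KJ hα1]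
  refine ⟨fun ⟨hconv, _⟩ => one_div_one_sub_mul_log_mono (y := becBound _ _ _) (exp_pos _) ?_,
    fun ⟨hconc, _⟩ => one_div_one_sub_mul_log_mono (x := becBound _ _ _) ?_ ?_⟩
  · rw [hK, hB]
    exact sum_le_sum fun y1 _ => sum_le_sum fun y2 _ => mul_le_mul_of_nonneg_left
      (kH_bconv_le_becBound hα hα1 hconv (ha1 y1) (ha2 y2)) (hweight y1 y2)
  · exact becBound_pos deltaH_pos (deltaH_ne_one hα hα1)
      (KJ_jointOfCond_mem_IH hα hα1 hq1 ha1) (exp_pos _)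
  · rw [hK, hB]
    exact sum_le_sum fun y1 _ => sum_le_sum fun y2 _ => mul_le_mul_of_nonneg_left
      (becBound_le_kH_bconv hα hα1 hconc (ha1 y1) (ha2 y2)) (hweight y1 y2)
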